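/- arXiv:1710.05496 — 14 statements merged into one kernel-verified Lean document; each statement's English description precedes it below -/
import Mathlib

section
/- Let R be a commutative ring and Λ a set of prime ideals of R. Then Λ satisfies prime avoidance if and only if for every prime ideal q of R with q ⊆ ⋃_{p ∈ Λ} p, there exists p ∈ Λ with q ⊆ p. (That is, it suffices to check the prime avoidance condition on prime ideals.) -/
/-- A set `Λ` of prime ideals of a commutative ring `R` satisfies prime avoidance if
for every ideal `I` of `R`, `I ⊆ ⋃_{p ∈ Λ} p` implies `I ⊆ p` for some `p ∈ Λ`. -/
def SatisfiesPrimeAvoidance {R : Type*} [CommRing R] (Λ : Set (Ideal R)) : Prop :=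
  ∀ I : Ideal R, ((I : Set R) ⊆ ⋃ p ∈ Λ, (p : Set R)) → ∃ p ∈ Λ, I ≤ p

/-- it suffices to check the prime avoidance condition on prime ideals. -/
theorem satisfiesPrimeAvoidance_iff_primes {R : Type*} [CommRing R] (Λ : Set (Ideal R))
    (hprime : ∀ p ∈ Λ, p.IsPrime) :
    SatisfiesPrimeAvoidance Λ ↔
      ∀ q : Ideal R, q.IsPrime → ((q : Set R) ⊆ ⋃ p ∈ Λ, (p : Set R)) → ∃ p ∈ Λ, q ≤ p := by
  constructor
  · intro h q _ hq
    exact h q hq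
  · intro h I hI
    set S : Set (Ideal R) := {J : Ideal R | (J : Set R) ⊆ ⋃ p ∈ Λ, (p : Set R)} with hS
    obtain ⟨J, hIJ, hJS, hJmax⟩ := zorn_le_nonempty₀ S (fun c hcS hc y hy => by
      refine ⟨sSup c, ?_, fun z hz => le_sSup hz⟩
      intro x hx
      obtain ⟨K, hKc, hxK⟩ := (Submodule.mem_sSup_of_directed ⟨y, hy⟩
        hc.directedOn).mp hx
      exact hcS hKc hxK) I hI
    -- J is prime
    have hJne : J ≠ ⊤ := by
      intro htop
      have h1 : (1 : R) ∈ ⋃ p ∈ Λ, (p : Set R) := hJS (by simp [htop])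
      simp only [Set.mem_iUnion] at h1
      obtain ⟨p, hp, h1p⟩ := h1
      exact (hprime p hp).ne_top (Ideal.eq_top_of_unit_mem p 1 1 h1p (mul_one 1))
    have hJprime : J.IsPrime := by
      refine ⟨hJne, fun {a b} hab => ?_⟩
      by_contra hcon
      push_neg at hcon
      obtain ⟨ha, hb⟩ := hcon
      have key : ∀ z : R, z ∉ J → ∃ x, x ∈ J ⊔ Ideal.span {z} ∧
          x ∉ ⋃ p ∈ Λ, (p : Set R) := by
        intro z hz
        by_contra hcon2
        push_neg at hcon2
        have : J ⊔ Ideal.span {z} ∈ S := fun x hx => hcon2 x hx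
        have := hJmax this (le_sup_left : J ≤ J ⊔ Ideal.span {z})
        exact hz (this (Ideal.mem_sup_right (Ideal.subset_span rfl)))
      obtain ⟨x, hxmem, hxnot⟩ := key a ha
      obtain ⟨y, hymem, hynot⟩ := key b hb
      obtain ⟨j, hj, u, hu, rfl⟩ := Submodule.mem_sup.mp hxmem
      obtain ⟨j', hj', v, hv, rfl⟩ := Submodule.mem_sup.mp hymem
      obtain ⟨r, rfl⟩ := Ideal.mem_span_singleton'.mp hu
      obtain ⟨s, rfl⟩ := Ideal.mem_span_singleton'.mp hv
      have hxy : (j + r * a) * (j' + s * b) ∈ J := by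
        have : (j + r * a) * (j' + s * b)
            = j * (j' + s * b) + (r * s) * (a * b) + j' * (r * a) := by ring
        rw [this]
        exact J.add_mem (J.add_mem (J.mul_mem_right _ hj) (J.mul_mem_left _ hab))
          (J.mul_mem_right _ hj')
      have := hJS hxy
      simp only [Set.mem_iUnion] at this
      obtain ⟨p, hp, hpmem⟩ := this
      rcases (hprime p hp).mem_or_mem hpmem with h' | h'
      · exact hxnot (Set.mem_iUnion₂.mpr ⟨p, hp, h'⟩)
      · exact hynot (Set.mem_iUnion₂.mpr ⟨p, hp, h'⟩)
    obtain ⟨p, hp, hJp⟩ := h J hJprime hJS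
    exact ⟨p, hp, hIJ.trans hJp⟩
end

section
/- Let R be a commutative Noetherian Jacobson ring and m a maximal ideal of R with height at least 2. Then m is contained in the union of all maximal ideals of R other than m. -/
universe u

/-- A finitely generated module over a Noetherian ring which is killed by a power of a
maximal ideal is Artinian. -/
lemma isArtinian_of_maximal_pow_smul {R : Type u} [CommRing R] [IsNoetherianRing R]
    (m : Ideal R) (hm : m.IsMaximal) :
    ∀ (k : ℕ) (M : Type u) [AddCommGroup M] [Module R M] [Module.Finite R M],
      m ^ k • (⊤ : Submodule R M) = ⊥ → IsArtinian R M := by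
  intro k
  induction k with
  | zero =>
    intro M _ _ _ h
    rw [pow_zero, Ideal.one_eq_top, Submodule.top_smul] at h
    haveI : Subsingleton M := by
      refine subsingleton_of_forall_eq 0 fun y => ?_
      have : y ∈ (⊥ : Submodule R M) := h ▸ Submodule.mem_top
      simpa using this
    infer_instance
  | succ k ih =>
    intro M _ _ _ h
    set S : Submodule R M := m • ⊤ with hS
    haveI : Module.Finite R S := Module.Finite.iff_fg.mpr (IsNoetherian.noetherian S)
    have hkill : m ^ k • (⊤ : Submodule R S) = ⊥ := by
      have hmap : (m ^ k • (⊤ : Submodule R S)).map S.subtype =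
          m ^ k • ((⊤ : Submodule R S).map S.subtype) := Submodule.map_smul'' _ _ _
      rw [Submodule.map_subtype_top] at hmap
      have : m ^ k • S = ⊥ := by
        rw [hS, ← h, pow_succ, ← smul_eq_mul, Submodule.smul_assoc]
      rw [this] at hmap
      refine (Submodule.eq_bot_iff _).mpr fun y hy => ?_
      have : S.subtype y ∈ (m ^ k • (⊤ : Submodule R S)).map S.subtype :=
        Submodule.mem_map_of_mem hy
      rw [hmap] at this
      exact Subtype.val_injective (by simpa using this)
    have h1 : IsArtinian R S := ih S hkill
    -- the quotient is a finite module over the field R/m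
    have htor : Module.IsTorsionBySet R (M ⧸ S) (m : Set R) := by
      rintro y ⟨a, ha⟩
      obtain ⟨z, rfl⟩ := Submodule.Quotient.mk_surjective S y
      rw [← Submodule.Quotient.mk_smul, Submodule.Quotient.mk_eq_zero]
      exact Submodule.smul_mem_smul ha Submodule.mem_top
    letI : Module (R ⧸ m) (M ⧸ S) := htor.module
    haveI : IsScalarTower R (R ⧸ m) (M ⧸ S) := htor.isScalarTower
    letI : Field (R ⧸ m) := Ideal.Quotient.field m
    haveI : Module.Finite (R ⧸ m) (M ⧸ S) :=
      Module.Finite.of_restrictScalars_finite R (R ⧸ m) (M ⧸ S)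
    have h2 : IsArtinian (R ⧸ m) (M ⧸ S) := isArtinian_of_fg_of_artinian'
    have hsur : Function.Surjective (algebraMap R (R ⧸ m)) := Ideal.Quotient.mk_surjective
    let g : Submodule R (M ⧸ S) → Submodule (R ⧸ m) (M ⧸ S) := fun N =>
      { carrier := N
        add_mem' := fun ha hb => N.add_mem ha hb
        zero_mem' := N.zero_mem
        smul_mem' := by
          intro r y hy
          obtain ⟨r, rfl⟩ := hsur r
          rw [algebraMap_smul]
          exact N.smul_mem r hy }
    have hg : ∀ {N N' : Submodule R (M ⧸ S)}, g N ≤ g N' ↔ N ≤ N' := fun {N N'} =>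
      ⟨fun h z hz => h hz, fun h z hz => h hz⟩
    let e : Submodule R (M ⧸ S) ↪o Submodule (R ⧸ m) (M ⧸ S) :=
      { toFun := g
        inj' := fun N N' h => le_antisymm (hg.mp h.le) (hg.mp h.ge)
        map_rel_iff' := hg }
    have h2' : IsArtinian R (M ⧸ S) := ⟨e.wellFounded h2.wf⟩
    exact (isArtinian_iff_submodule_quotient S).mpr ⟨h1, h2'⟩

/-- in a commutative Noetherian Jacobson ring, any maximal ideal of height at
least 2 is contained in the union of all the other maximal ideals. -/
theorem maximal_subset_iUnion_other_maximals {R : Type*} [CommRing R] [IsNoetherianRing R]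
    [IsJacobsonRing R] (m : Ideal R) (hm : m.IsMaximal)
    (hht : 2 ≤ Order.height (⟨m, hm.isPrime⟩ : PrimeSpectrum R)) :
    (m : Set R) ⊆ ⋃ n ∈ {n : Ideal R | n.IsMaximal ∧ n ≠ m}, (n : Set R) := by
  intro x hx
  by_contra hcon
  -- every maximal ideal containing x is m
  have hxother : ∀ n : Ideal R, n.IsMaximal → x ∈ n → n = m := by
    intro n hn hxn
    by_contra hne
    exact hcon (Set.mem_biUnion (show n ∈ {n : Ideal R | n.IsMaximal ∧ n ≠ m} from ⟨hn, hne⟩) hxn)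
  -- every prime containing x is m
  have hprime : ∀ p : Ideal R, p.IsPrime → x ∈ p → p = m := by
    intro p hp hxp
    have hj := isJacobsonRing_iff_prime_eq.mp ‹IsJacobsonRing R› p hp
    have hset : {J : Ideal R | p ≤ J ∧ J.IsMaximal} = {m} := by
      ext J
      constructor
      · rintro ⟨hle, hmax⟩
        exact hxother J hmax (hle hxp)
      · rintro rfl
        obtain ⟨J, hJmax, hJle⟩ := Ideal.exists_le_maximal p hp.ne_top
        have := hxother J hJmax (hJle hxp)
        subst this
        exact ⟨hJle, hJmax⟩
    rw [← hj, Ideal.jacobson, hset, sInf_singleton]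
  -- extract a chain p₀ < q < m
  obtain ⟨c, hclast, hclen⟩ :=
    Order.exists_series_of_le_height (⟨m, hm.isPrime⟩ : PrimeSpectrum R)
      (n := 2) (by exact_mod_cast hht)
  have h01 : c ⟨0, by omega⟩ < c ⟨1, by omega⟩ := c.strictMono (by simp [Fin.lt_def])
  have h12 : c ⟨1, by omega⟩ < c.last := by
    refine c.strictMono ?_
    simp [Fin.lt_def, Fin.last, hclen]
  set q : Ideal R := (c ⟨1, by omega⟩).asIdeal with hqdef
  set p₀ : Ideal R := (c ⟨0, by omega⟩).asIdeal with hp0def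
  haveI hqprime : q.IsPrime := (c ⟨1, by omega⟩).isPrime
  haveI hp0prime : p₀.IsPrime := (c ⟨0, by omega⟩).isPrime
  have hqm : q < m := by
    have h := (PrimeSpectrum.asIdeal_lt_asIdeal _ _).mpr h12
    rwa [hclast] at h
  have hp0q : p₀ < q := (PrimeSpectrum.asIdeal_lt_asIdeal _ _).mpr h01
  have hxq : x ∉ q := fun hxq => absurd (hprime q hqprime hxq) hqm.ne
  -- m^k ≤ span {x}
  have hrad : (Ideal.span {x}).radical = m := by
    rw [Ideal.radical_eq_sInf]
    have hset : {J : Ideal R | Ideal.span {x} ≤ J ∧ J.IsPrime} = {m} := by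
      ext J
      constructor
      · rintro ⟨hle, hJ⟩
        exact hprime J hJ (hle (Ideal.subset_span rfl))
      · rintro rfl
        exact ⟨Ideal.span_le.mpr (Set.singleton_subset_iff.mpr hx), hm.isPrime⟩
    rw [hset, sInf_singleton]
  obtain ⟨k, hk⟩ := Ideal.exists_radical_pow_le_of_fg (Ideal.span {x})
    (IsNoetherian.noetherian _)
  rw [hrad] at hk
  -- R / span {x} is Artinian
  haveI hart : IsArtinian R (R ⧸ Ideal.span {x}) := by
    refine isArtinian_of_maximal_pow_smul m hm k _ ?_
    have heq : m ^ k • (⊤ : Submodule R (R ⧸ Ideal.span {x})) =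
        Submodule.map (Ideal.span {x} : Submodule R R).mkQ (m ^ k • (⊤ : Submodule R R)) := by
      rw [Submodule.map_smul'', Submodule.map_top, Submodule.range_mkQ]
    rw [heq, smul_eq_mul, Ideal.mul_top]
    rw [← le_bot_iff]
    intro y hy
    obtain ⟨z, hz, rfl⟩ := Submodule.mem_map.mp hy
    rw [Submodule.mem_bot, Submodule.mkQ_apply, Submodule.Quotient.mk_eq_zero]
    exact hk hz
  -- symbolic powers
  set Rq := Localization.AtPrime q with hRq
  set S : ℕ → Ideal R :=
    fun n => ((q ^ n).map (algebraMap R Rq)).comap (algebraMap R Rq) with hSdef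
  have hSanti : ∀ n, S (n + 1) ≤ S n := fun n =>
    Ideal.comap_mono (Ideal.map_mono (Ideal.pow_le_pow_right (by omega)))
  have hqS : ∀ n, q ^ n ≤ S n := fun n => Ideal.le_comap_map
  -- key primary property: a * x ∈ S n → a ∈ S n (as x ∉ q)
  have hxunit : IsUnit (algebraMap R Rq x) :=
    IsLocalization.map_units Rq (⟨x, hxq⟩ : q.primeCompl)
  have hprimary : ∀ n a, a * x ∈ S n → a ∈ S n := by
    intro n a ha
    have : algebraMap R Rq (a * x) ∈ (q ^ n).map (algebraMap R Rq) := ha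
    rw [map_mul] at this
    obtain ⟨u, hu⟩ := hxunit
    have h2 : algebraMap R Rq a =
        ((u⁻¹ : Rqˣ) : Rq) * (algebraMap R Rq a * algebraMap R Rq x) := by
      rw [← hu]
      rw [← mul_assoc, mul_comm _ (algebraMap R Rq a), mul_assoc, Units.inv_mul, mul_one]
    show algebraMap R Rq a ∈ (q ^ n).map (algebraMap R Rq)
    rw [h2]
    exact Ideal.mul_mem_left _ _ this
  -- the chain of images of S n in the Artinian module R / span{x} stabilizes
  set π := (Ideal.span {x} : Submodule R R).mkQ with hπ
  set N : ℕ → Submodule R (R ⧸ Ideal.span {x}) := fun n => Submodule.map π (S n : Submodule R R)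
    with hNdef
  obtain ⟨_, ⟨n₀, rfl⟩, hmin⟩ := IsArtinian.set_has_minimal
    (Set.range N) ⟨N 0, Set.mem_range_self 0⟩
  have hNstab : N (n₀ + 1) = N n₀ := by
    have hle : N (n₀ + 1) ≤ N n₀ := Submodule.map_mono (hSanti n₀)
    by_contra hne
    exact hmin (N (n₀ + 1)) (Set.mem_range_self _) (lt_of_le_of_ne hle hne)
  -- deduce S n₀ ≤ S (n₀+1) ⊔ span{x} * S n₀
  have hstep : S n₀ ≤ S (n₀ + 1) ⊔ Ideal.span {x} * S n₀ := by
    intro y hy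
    have : π y ∈ N (n₀ + 1) := hNstab ▸ Submodule.mem_map_of_mem (f := π) hy
    obtain ⟨b, hb, hby⟩ := Submodule.mem_map.mp this
    have hsub : y - b ∈ Ideal.span {x} := by
      have h0 : π (y - b) = 0 := by rw [map_sub, hby, sub_self]
      rwa [hπ, Submodule.mkQ_apply, Submodule.Quotient.mk_eq_zero] at h0
    obtain ⟨a, ha⟩ := Ideal.mem_span_singleton'.mp hsub
    have haS : a ∈ S n₀ := by
      refine hprimary n₀ a ?_
      rw [ha]
      exact Submodule.sub_mem _ hy (hSanti n₀ hb)
    have : y = b + a * x := by rw [ha]; ring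
    rw [this]
    exact Submodule.add_mem _ (Submodule.mem_sup_left hb)
      (Submodule.mem_sup_right
        (by rw [mul_comm a x]; exact Ideal.mul_mem_mul (Ideal.subset_span rfl) haS))
  -- Nakayama: find r ≡ 1 mod (x) with r * S n₀ ⊆ S (n₀+1)
  obtain ⟨r, hr1, hr2⟩ :
      ∃ r : R, r - 1 ∈ Ideal.span {x} ∧ ∀ y ∈ S n₀, r * y ∈ S (n₀ + 1) := by
    set π₂ := (S (n₀ + 1) : Submodule R R).mkQ with hπ₂
    set N₂ : Submodule R (R ⧸ S (n₀ + 1)) := Submodule.map π₂ (S n₀ : Submodule R R) with hN₂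
    have hN₂fg : N₂.FG := IsNoetherian.noetherian N₂
    have hIN : N₂ ≤ Ideal.span {x} • N₂ := by
      intro z hz
      obtain ⟨y, hy, rfl⟩ := Submodule.mem_map.mp hz
      have := hstep hy
      rcases Submodule.mem_sup.mp this with ⟨u, hu, v, hv, rfl⟩
      have hπu : π₂ u = 0 := by
        rw [hπ₂, Submodule.mkQ_apply, Submodule.Quotient.mk_eq_zero]
        exact hu
      rw [map_add, hπu, zero_add]
      have : Submodule.map π₂ ((Ideal.span {x} * S n₀ : Ideal R) : Submodule R R) =
          Ideal.span {x} • N₂ := by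
        rw [hN₂, ← Submodule.map_smul'']
        rfl
      rw [← this]
      exact Submodule.mem_map_of_mem (f := π₂) hv
    obtain ⟨r, hr1, hr2⟩ :=
      Submodule.exists_sub_one_mem_and_smul_eq_zero_of_fg_of_le_smul
        (Ideal.span {x}) N₂ hN₂fg hIN
    refine ⟨r, hr1, fun y hy => ?_⟩
    have hz := hr2 (π₂ y) (Submodule.mem_map_of_mem (f := π₂) hy)
    have h0 : π₂ (r * y) = 0 := by
      have hsm : π₂ (r • y) = r • π₂ y := map_smul π₂ r y
      rw [smul_eq_mul] at hsm
      rw [hsm, hz]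
    rwa [hπ₂, ← LinearMap.mem_ker, Submodule.ker_mkQ] at h0
  -- r is not in q
  have hrq : r ∉ q := by
    intro hrq
    have h1m : (1 : R) ∈ m := by
      have : (1 : R) = r - (r - 1) := by ring
      rw [this]
      exact Submodule.sub_mem _ (hqm.le hrq)
        (Ideal.span_le.mpr (Set.singleton_subset_iff.mpr hx) hr1)
    exact hm.ne_top (Ideal.eq_top_iff_one m |>.mpr h1m)
  -- in the localization, Q^n₀ = Q^(n₀+1)
  set Q : Ideal Rq := q.map (algebraMap R Rq) with hQ
  have hrunit : IsUnit (algebraMap R Rq r) :=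
    IsLocalization.map_units Rq (⟨r, hrq⟩ : q.primeCompl)
  have hQstab : Q ^ n₀ ≤ Q ^ (n₀ + 1) := by
    rw [hQ, ← Ideal.map_pow, ← Ideal.map_pow]
    rw [Ideal.map_le_iff_le_comap]
    intro y hy
    have hrY : r * y ∈ S (n₀ + 1) := hr2 y (hqS n₀ hy)
    have : algebraMap R Rq (r * y) ∈ (q ^ (n₀ + 1)).map (algebraMap R Rq) := hrY
    rw [map_mul] at this
    show algebraMap R Rq y ∈ (q ^ (n₀ + 1)).map (algebraMap R Rq)
    have h2 : algebraMap R Rq y =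
        ↑hrunit.unit⁻¹ * (algebraMap R Rq r * algebraMap R Rq y) := by
      rw [← mul_assoc, IsUnit.val_inv_mul, one_mul]
    rw [h2]
    exact Ideal.mul_mem_left _ _ this
  -- Nakayama in the local ring Rq : Q^n₀ = 0
  haveI : IsNoetherianRing Rq :=
    IsLocalization.isNoetherianRing q.primeCompl Rq inferInstance
  have hQmax : Q = IsLocalRing.maximalIdeal Rq := Localization.AtPrime.map_eq_maximalIdeal
  have hQbot : Q ^ n₀ = ⊥ := by
    refine Submodule.eq_bot_of_le_smul_of_le_jacobson_bot Q (Q ^ n₀)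
      (IsNoetherian.noetherian _) ?_ ?_
    · calc (Q ^ n₀ : Ideal Rq) ≤ Q ^ (n₀ + 1) := hQstab
        _ = Q • Q ^ n₀ := by rw [pow_succ, smul_eq_mul, mul_comm]
    · rw [hQmax]
      exact IsLocalRing.maximalIdeal_le_jacobson ⊥
  -- contradiction with p₀ < q
  obtain ⟨y, hyq, hyp₀⟩ := SetLike.exists_of_lt hp0q
  have hyQ : algebraMap R Rq y ∈ Q := Ideal.mem_map_of_mem _ hyq
  have : (algebraMap R Rq y) ^ n₀ ∈ Q ^ n₀ := Ideal.pow_mem_pow hyQ n₀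
  rw [hQbot] at this
  have h0 : algebraMap R Rq (y ^ n₀) = 0 := by
    rw [map_pow]
    simpa using this
  obtain ⟨s, hs⟩ := (IsLocalization.map_eq_zero_iff q.primeCompl Rq _).mp h0
  have hsp : (s : R) * y ^ n₀ ∈ p₀ := by rw [hs]; exact Submodule.zero_mem _
  rcases hp0prime.mem_or_mem hsp with h | h
  · exact s.2 (hp0q.le h)
  · exact hyp₀ (hp0prime.mem_of_pow_mem _ h)
end

section
/- Let R be a commutative ring, U ⊆ R a multiplicative submonoid, and let φ : R → S be a localization of R at U (i.e., S is the localization U⁻¹R with its canonical map). If Λ is a set of prime ideals of S that satisfies prime avoidance, then the set { φ⁻¹(q) : q ∈ Λ } of prime ideals of R satisfies prime avoidance. -/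
/-- prime avoidance pulls back along a localization map. -/
theorem satisfiesPrimeAvoidance_comap_of_isLocalization {R S : Type*} [CommRing R] [CommRing S]
    [Algebra R S] (U : Submonoid R) [IsLocalization U S] (Λ : Set (Ideal S))
    (hprime : ∀ q ∈ Λ, q.IsPrime) (hΛ : SatisfiesPrimeAvoidance Λ) :
    SatisfiesPrimeAvoidance ((fun q => Ideal.comap (algebraMap R S) q) '' Λ) := by
  intro I hI
  have hmap : ((Ideal.map (algebraMap R S) I : Ideal S) : Set S) ⊆ ⋃ q ∈ Λ, (q : Set S) := by
    intro y hy
    rw [SetLike.mem_coe, IsLocalization.mem_map_algebraMap_iff U] at hy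
    obtain ⟨⟨x, u⟩, hxu⟩ := hy
    have hx : (x : R) ∈ ⋃ p ∈ (fun q => Ideal.comap (algebraMap R S) q) '' Λ, (p : Set R) :=
      hI x.2
    simp only [Set.mem_iUnion] at hx ⊢
    obtain ⟨p, ⟨q, hq, rfl⟩, hxp⟩ := hx
    refine ⟨q, hq, ?_⟩
    have hprimeq := hprime q hq
    have : y * algebraMap R S u ∈ q := by rw [hxu]; exact hxp
    rcases hprimeq.mem_or_mem this with h | h
    · exact h
    · exact absurd h (fun h => hprimeq.ne_top (q.eq_top_of_isUnit_mem h
        (IsLocalization.map_units S u)))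
  obtain ⟨q, hq, hle⟩ := hΛ _ hmap
  exact ⟨Ideal.comap (algebraMap R S) q, ⟨q, hq, rfl⟩,
    fun x hx => hle (Ideal.mem_map_of_mem _ hx)⟩
end

section
/- Let R be a commutative ring, U ⊆ R a multiplicative submonoid, and I an ideal of R. Then the set of prime ideals p of R such that I ⊆ p and p ∩ U = ∅ satisfies prime avoidance. (In particular, taking U = {1} or I = 0: the set V(I) of primes containing I satisfies prime avoidance, and the set of primes disjoint from U satisfies prime avoidance.) -/
/-- for a multiplicative submonoid `U` and ideal `I` of `R`, the set of primes
containing `I` and disjoint from `U` satisfies prime avoidance. -/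
theorem satisfiesPrimeAvoidance_of_le_of_disjoint {R : Type*} [CommRing R] (U : Submonoid R)
    (I : Ideal R) :
    SatisfiesPrimeAvoidance
      {p : Ideal R | p.IsPrime ∧ I ≤ p ∧ (p : Set R) ∩ (U : Set R) = ∅} := by
  intro J hJ
  classical
  set mk := Ideal.Quotient.mk I with hmk
  set U' : Submonoid (R ⧸ I) := U.map (mk : R →+* R ⧸ I) with hU'
  set L := Localization U' with hL
  set f : R →+* L := (algebraMap (R ⧸ I) L).comp mk with hf
  by_cases htop : J.map f = ⊤
  · -- 1 ∈ J.map f ; derive a contradiction using hJ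
    exfalso
    have h1 : (1 : L) ∈ J.map f := htop ▸ Submodule.mem_top
    rw [hf, ← Ideal.map_map] at h1
    rw [IsLocalization.mem_map_algebraMap_iff U' L] at h1
    obtain ⟨⟨a, s⟩, ha⟩ := h1
    rw [one_mul] at ha
    -- algebraMap s = algebraMap a, so ∃ c ∈ U', c * s = c * a
    obtain ⟨c, hc⟩ := (IsLocalization.eq_iff_exists U' L).mp ha
    -- (c * s : R⧸I) ∈ U' and c * a ∈ J.map mk
    have hm : ((c : R ⧸ I) * (s : R ⧸ I)) ∈ U' := mul_mem c.2 s.2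
    have hmem : ((c : R ⧸ I) * (s : R ⧸ I)) ∈ J.map (mk : R →+* R ⧸ I) := by
      rw [hc]; exact Ideal.mul_mem_left _ _ a.2
    obtain ⟨u, hu, huw⟩ := hm
    obtain ⟨b, hb, hbw⟩ :=
      (Ideal.mem_map_iff_of_surjective (mk : R →+* R ⧸ I)
        Ideal.Quotient.mk_surjective).mp hmem
    -- b ∈ J, mk b = mk u, so b - u ∈ I
    have hbu : b - u ∈ I := by
      have : mk b = mk u := by rw [hbw, huw]
      rwa [Ideal.Quotient.mk_eq_mk_iff_sub_mem] at this
    obtain ⟨_, ⟨p, rfl⟩, _, ⟨hpΛ, rfl⟩, hbp⟩ := hJ hb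
    obtain ⟨hp, hIp, hpU⟩ := hpΛ
    have hup : u ∈ p := by
      have := p.sub_mem hbp (hIp hbu)
      simpa using this
    exact Set.eq_empty_iff_forall_notMem.mp hpU u ⟨hup, hu⟩
  · obtain ⟨m, hm, hJm⟩ := Ideal.exists_le_maximal _ htop
    refine ⟨m.comap f, ⟨Ideal.IsPrime.comap (hK := hm.isPrime) f, ?_, ?_⟩,
      le_trans Ideal.le_comap_map (Ideal.comap_mono hJm)⟩
    · intro x hx
      have : f x = 0 := by
        rw [hf, RingHom.comp_apply, Ideal.Quotient.eq_zero_iff_mem.mpr hx, map_zero]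
      simp [Ideal.mem_comap, this]
    · rw [Set.eq_empty_iff_forall_notMem]
      rintro u ⟨hup, huU⟩
      have hunit : IsUnit (f u) := by
        have : IsUnit (algebraMap (R ⧸ I) L (mk u)) :=
          IsLocalization.map_units L (⟨mk u, ⟨u, huU, rfl⟩⟩ : U')
        simpa [hf] using this
      exact hm.ne_top (m.eq_top_of_isUnit_mem hup hunit)
end

section
/- Let R be a commutative ring, U ⊆ R a multiplicative submonoid, and I an ideal of R. Then the set of prime ideals p of R that are maximal (with respect to inclusion) among primes satisfying I ⊆ p and p ∩ U = ∅ satisfies prime avoidance. -/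
/-- for a multiplicative submonoid `U` and ideal `I` of `R`, the set of primes
maximal (w.r.t. inclusion) among those containing `I` and disjoint from `U` satisfies prime
avoidance. -/
theorem satisfiesPrimeAvoidance_maximal_of_le_of_disjoint {R : Type*} [CommRing R]
    (U : Submonoid R) (I : Ideal R) :
    SatisfiesPrimeAvoidance
      {p : Ideal R | (p.IsPrime ∧ I ≤ p ∧ (p : Set R) ∩ (U : Set R) = ∅) ∧
        ∀ q : Ideal R, q.IsPrime → I ≤ q → (q : Set R) ∩ (U : Set R) = ∅ → p ≤ q → p = q} := by
  intro J hJ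
  by_cases hdis : Disjoint ((J ⊔ I : Ideal R) : Set R) (U : Set R)
  · -- Zorn: find a maximal ideal containing J ⊔ I disjoint from U
    have hchain : ∀ c ⊆ {p : Ideal R | Disjoint (p : Set R) (U : Set R)}, IsChain (· ≤ ·) c →
        ∀ x ∈ c, ∃ ub ∈ {p : Ideal R | Disjoint (p : Set R) (U : Set R)}, ∀ z ∈ c, z ≤ ub := by
      intro c hc hc' x hx
      cases isEmpty_or_nonempty c
      · exact ⟨J ⊔ I, hdis, fun K hK ↦ isEmptyElim (⟨K, hK⟩ : c)⟩
      refine ⟨sSup c, Set.disjoint_left.mpr fun y hy ↦ ?_, fun _ ↦ le_sSup⟩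
      have ⟨q, hq⟩ := (Submodule.mem_iSup_of_directed _ hc'.directed).mp (sSup_eq_iSup' c ▸ hy)
      exact Set.disjoint_left.mp (hc q.2) hq
    obtain ⟨p, hJIp, hp⟩ := zorn_le_nonempty₀ {p : Ideal R | Disjoint (p : Set R) (U : Set R)}
      hchain (J ⊔ I) hdis
    · have hprime : p.IsPrime :=
        Ideal.isPrime_of_maximally_disjoint _ _ hp.1 (fun _ ↦ hp.not_prop_of_gt)
      refine ⟨p, ⟨⟨hprime, le_trans le_sup_right hJIp,
        Set.disjoint_iff_inter_eq_empty.mp hp.1⟩, ?_⟩, le_trans le_sup_left hJIp⟩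
      intro q hq hIq hqU hpq
      exact le_antisymm hpq (hp.2 (Set.disjoint_iff_inter_eq_empty.mpr hqU) hpq)
  · -- some u ∈ U lies in J ⊔ I; derive a contradiction
    rw [Set.not_disjoint_iff] at hdis
    obtain ⟨u, hu, huU⟩ := hdis
    rw [SetLike.mem_coe, Submodule.mem_sup] at hu
    obtain ⟨j, hj, i, hi, rfl⟩ := hu
    obtain ⟨p, hpΛ, hjp⟩ := Set.mem_iUnion₂.mp (hJ hj)
    exfalso
    have : (j + i) ∈ (p : Set R) ∩ (U : Set R) :=
      ⟨p.add_mem hjp (hpΛ.1.2.1 hi), huU⟩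
    rw [hpΛ.1.2.2] at this
    exact this
end

section
/- Let R be a commutative ring and f ∈ R. Then the basic Zariski-open set D(f), i.e. the set of all prime ideals p of R with f ∉ p, satisfies prime avoidance. -/
/-- the basic Zariski-open set `D(f)` satisfies prime avoidance. -/
theorem basicOpen_satisfiesPrimeAvoidance {R : Type*} [CommRing R] (f : R) :
    SatisfiesPrimeAvoidance {p : Ideal R | p.IsPrime ∧ f ∉ p} := by
  intro I hI
  have hdisj : Disjoint (I : Set R) (Submonoid.powers f : Set R) := by
    rw [Set.disjoint_left]
    rintro x hx ⟨n, rfl⟩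
    obtain ⟨p, ⟨hprime, hfp⟩, hmem⟩ := Set.mem_iUnion₂.mp (hI hx)
    exact hfp (hprime.mem_of_pow_mem n hmem)
  obtain ⟨p, hprime, hle, hdisj'⟩ := Ideal.exists_le_prime_disjoint I (Submonoid.powers f) hdisj
  exact ⟨p, ⟨hprime, fun hf => Set.disjoint_left.mp hdisj' hf ⟨1, by simp⟩⟩, hle⟩
end

section
/- Let R be a commutative ring, Λ a set of prime ideals of R, and W := R \ ⋃_{p ∈ Λ} p. Then Λ satisfies prime avoidance if and only if the set of prime ideals of R that are maximal among primes disjoint from W equals Λ_max, the set of maximal elements of Λ under inclusion. -/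
lemma exists_maximal_prime_disjoint {R : Type*} [CommRing R] (S : Submonoid R) (I : Ideal R)
    (disj : Disjoint (I : Set R) S) :
    ∃ p : Ideal R, p.IsPrime ∧ I ≤ p ∧ Disjoint (p : Set R) S ∧
      ∀ q : Ideal R, Disjoint (q : Set R) S → p ≤ q → p = q := by
  have ⟨p, hIp, hp⟩ := zorn_le_nonempty₀ {p : Ideal R | Disjoint (p : Set R) S}
    (fun c hc hc' x hx ↦ ?_) I disj
  · exact ⟨p, Ideal.isPrime_of_maximally_disjoint _ _ hp.1 (fun _ ↦ hp.not_prop_of_gt), hIp,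
      hp.1, fun q hq hle ↦ hp.eq_of_le hq hle⟩
  cases isEmpty_or_nonempty c
  · exact ⟨I, disj, fun J hJ ↦ isEmptyElim (⟨J, hJ⟩ : c)⟩
  refine ⟨sSup c, Set.disjoint_left.mpr fun x hx ↦ ?_, fun _ ↦ le_sSup⟩
  have ⟨p, hp⟩ := (Submodule.mem_iSup_of_directed _ hc'.directed).mp (sSup_eq_iSup' c ▸ hx)
  exact Set.disjoint_left.mp (hc p.2) hp

/-- with `W := R \ ⋃_{p ∈ Λ} p`, the set `Λ` satisfies prime avoidance iff the
primes of `R` maximal among those disjoint from `W` are exactly the maximal elements of `Λ`. -/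
theorem satisfiesPrimeAvoidance_iff_maximal_disjoint_eq_max {R : Type*} [CommRing R]
    (Λ : Set (Ideal R)) (hprime : ∀ p ∈ Λ, p.IsPrime)
    (W : Set R) (hW : W = (⋃ p ∈ Λ, (p : Set R))ᶜ) :
    SatisfiesPrimeAvoidance Λ ↔
      {q : Ideal R | (q.IsPrime ∧ (q : Set R) ∩ W = ∅) ∧
          ∀ q' : Ideal R, q'.IsPrime → (q' : Set R) ∩ W = ∅ → q ≤ q' → q = q'} =
        {p ∈ Λ | ∀ q ∈ Λ, p ≤ q → p = q} := by
  -- translation: for an ideal q, (q : Set R) ∩ W = ∅ ↔ q ⊆ ⋃ p ∈ Λ, p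
  have key : ∀ q : Ideal R, ((q : Set R) ∩ W = ∅ ↔ (q : Set R) ⊆ ⋃ p ∈ Λ, (p : Set R)) := by
    intro q
    rw [hW, ← Set.diff_eq, Set.diff_eq_empty]
  -- W as a submonoid
  have hone : (1 : R) ∈ W := by
    rw [hW]
    simp only [Set.mem_compl_iff, Set.mem_iUnion₂, not_exists]
    intro p hp h1
    exact (hprime p hp).ne_top ((Ideal.eq_top_iff_one p).mpr h1)
  have hmul : ∀ {a b : R}, a ∈ W → b ∈ W → a * b ∈ W := by
    rw [hW]
    intro a b ha hb hab
    simp only [Set.mem_compl_iff, Set.mem_iUnion₂, not_exists] at ha hb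
    rw [Set.mem_iUnion₂] at hab
    obtain ⟨p, hp, hmem⟩ := hab
    rcases (hprime p hp).mem_or_mem hmem with h | h
    · exact ha p hp h
    · exact hb p hp h
  set S : Submonoid R := ⟨⟨W, fun ha hb => hmul ha hb⟩, hone⟩ with hS
  have hSW : (S : Set R) = W := rfl
  constructor
  · intro hpa
    ext q
    simp only [Set.mem_setOf_eq]
    constructor
    · rintro ⟨⟨hq, hqW⟩, hmax⟩
      obtain ⟨p, hp, hqp⟩ := hpa q ((key q).mp hqW)
      have hpW : (p : Set R) ∩ W = ∅ := (key p).mpr (Set.subset_biUnion_of_mem hp)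
      have : q = p := hmax p (hprime p hp) hpW hqp
      subst this
      refine ⟨hp, fun q' hq' hle ↦ ?_⟩
      exact hmax q' (hprime q' hq') ((key q').mpr (Set.subset_biUnion_of_mem hq')) hle
    · rintro ⟨hq, hmax⟩
      have hqW : (q : Set R) ∩ W = ∅ := (key q).mpr (Set.subset_biUnion_of_mem hq)
      refine ⟨⟨hprime q hq, hqW⟩, fun q' hq' hq'W hle ↦ ?_⟩
      obtain ⟨p, hp, hq'p⟩ := hpa q' ((key q').mp hq'W)
      have : q = p := hmax p hp (hle.trans hq'p)
      exact le_antisymm hle (hq'p.trans this.ge)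
  · intro heq I hI
    have hdisj : Disjoint (I : Set R) (S : Set R) := by
      rw [Set.disjoint_iff_inter_eq_empty, hSW, key]
      exact hI
    obtain ⟨p, hp, hIp, hpdisj, hpmax⟩ := exists_maximal_prime_disjoint S I hdisj
    have hpmem : p ∈ {p ∈ Λ | ∀ q ∈ Λ, p ≤ q → p = q} := by
      rw [← heq]
      refine ⟨⟨hp, by rw [← hSW, ← Set.disjoint_iff_inter_eq_empty]; exact hpdisj⟩,
        fun q' hq' hq'W hle ↦ ?_⟩
      exact hpmax q' (by rw [Set.disjoint_iff_inter_eq_empty, hSW]; exact hq'W) hle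
    exact ⟨p, hpmem.1, hIp⟩
end

section
/- Let R be a commutative ring, Λ a set of prime ideals of R, and W := R \ ⋃_{p ∈ Λ} p. Then Λ satisfies prime avoidance if and only if the set of all prime ideals of R disjoint from W equals Λ_cl, the downward-closure of Λ (i.e. the set of primes q contained in some member of Λ). -/
/-- with `W := R \ ⋃_{p ∈ Λ} p`, the set `Λ` satisfies prime avoidance iff the
primes of `R` disjoint from `W` are exactly the downward-closure of `Λ`. -/
theorem satisfiesPrimeAvoidance_iff_disjoint_eq_cl {R : Type*} [CommRing R]
    (Λ : Set (Ideal R)) (hprime : ∀ p ∈ Λ, p.IsPrime)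
    (W : Set R) (hW : W = (⋃ p ∈ Λ, (p : Set R))ᶜ) :
    SatisfiesPrimeAvoidance Λ ↔
      {q : Ideal R | q.IsPrime ∧ (q : Set R) ∩ W = ∅} =
        {q : Ideal R | q.IsPrime ∧ ∃ p ∈ Λ, q ≤ p} := by
  subst hW
  have hdisj : ∀ q : Ideal R,
      ((q : Set R) ∩ (⋃ p ∈ Λ, (p : Set R))ᶜ = ∅) ↔ (q : Set R) ⊆ ⋃ p ∈ Λ, (p : Set R) := by
    intro q
    rw [← Set.disjoint_iff_inter_eq_empty, Set.disjoint_compl_right_iff_subset]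
  constructor
  · intro h
    ext q
    simp only [Set.mem_setOf_eq]
    constructor
    · rintro ⟨hq, hq2⟩
      exact ⟨hq, h q ((hdisj q).mp hq2)⟩
    · rintro ⟨hq, p, hp, hle⟩
      refine ⟨hq, (hdisj q).mpr fun x hx => Set.mem_biUnion hp (hle hx)⟩
  · intro h I hI
    -- W is a submonoid since all p ∈ Λ are prime
    set S : Submonoid R :=
      { carrier := (⋃ p ∈ Λ, (p : Set R))ᶜ
        one_mem' := by
          simp only [Set.mem_compl_iff, Set.mem_iUnion, not_exists]
          intro p hp
          exact (hprime p hp).1 ∘ (Ideal.eq_top_iff_one p).mpr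
        mul_mem' := by
          intro a b ha hb
          simp only [Set.mem_compl_iff, Set.mem_iUnion, not_exists] at ha hb ⊢
          intro p hp hab
          rcases (hprime p hp).mem_or_mem hab with h' | h'
          · exact ha p hp h'
          · exact hb p hp h' } with hS
    have hdisjIS : Disjoint (I : Set R) (S : Set R) := by
      show Disjoint (I : Set R) ((⋃ p ∈ Λ, (p : Set R))ᶜ)
      rw [Set.disjoint_compl_right_iff_subset]
      exact hI
    obtain ⟨q, hqprime, hIq, hqdisj⟩ := Ideal.exists_le_prime_disjoint I S hdisjIS
    have hq : q ∈ {q : Ideal R | q.IsPrime ∧ (q : Set R) ∩ (⋃ p ∈ Λ, (p : Set R))ᶜ = ∅} :=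
      ⟨hqprime, Set.disjoint_iff_inter_eq_empty.mp hqdisj⟩
    rw [h] at hq
    obtain ⟨_, p, hp, hqp⟩ := hq
    exact ⟨p, hp, hIq.trans hqp⟩
end

section
/- Let R be a commutative ring and Λ a set of prime ideals of R. Then Λ satisfies prime avoidance if and only if both of the following hold: (i) Λ_max satisfies prime avoidance, and (ii) every member of Λ is contained in some member of Λ_max (i.e. Λ ⊆ (Λ_max)_cl). -/
/-- `Λ` satisfies prime avoidance iff `Λ_max` satisfies prime avoidance and
every member of `Λ` is contained in some member of `Λ_max`. -/
theorem satisfiesPrimeAvoidance_iff_max {R : Type*} [CommRing R] (Λ : Set (Ideal R))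
    (hprime : ∀ p ∈ Λ, p.IsPrime) :
    SatisfiesPrimeAvoidance Λ ↔
      (SatisfiesPrimeAvoidance {p ∈ Λ | ∀ q ∈ Λ, p ≤ q → p = q} ∧
        ∀ p ∈ Λ, ∃ q ∈ {p ∈ Λ | ∀ q ∈ Λ, p ≤ q → p = q}, p ≤ q) := by
  constructor
  · intro hPA
    have hmax : ∀ p ∈ Λ, ∃ q ∈ {p ∈ Λ | ∀ q ∈ Λ, p ≤ q → p = q}, p ≤ q := by
      intro p hp
      obtain ⟨m, hpm, hm, hmx⟩ := zorn_le_nonempty₀ {q ∈ Λ | p ≤ q}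
        (fun c hc hchain y hy => by
          have hsub : ((sSup c : Ideal R) : Set R) ⊆ ⋃ q ∈ Λ, (q : Set R) := by
            intro x hx
            obtain ⟨i, hi, hxi⟩ :=
              (Submodule.mem_sSup_of_directed ⟨y, hy⟩ hchain.directedOn).1 hx
            exact Set.mem_biUnion (hc hi).1 hxi
          obtain ⟨q, hq, hle⟩ := hPA (sSup c) hsub
          refine ⟨q, ⟨hq, le_trans (hc hy).2 (le_trans (le_sSup hy) hle)⟩,
            fun z hz => le_trans (le_sSup hz) hle⟩) p ⟨hp, le_rfl⟩
      refine ⟨m, ⟨hm.1, fun r hr hmr => le_antisymm hmr (hmx ⟨hr, le_trans hm.2 hmr⟩ hmr)⟩, hpm⟩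
    refine ⟨?_, hmax⟩
    intro I hI
    have : (I : Set R) ⊆ ⋃ p ∈ Λ, (p : Set R) := by
      refine hI.trans ?_
      intro x hx
      simp only [Set.mem_iUnion] at hx ⊢
      obtain ⟨q, ⟨hq, _⟩, hxq⟩ := hx
      exact ⟨q, hq, hxq⟩
    obtain ⟨q, hq, hIq⟩ := hPA I this
    obtain ⟨m, hm, hqm⟩ := hmax q hq
    exact ⟨m, hm, hIq.trans hqm⟩
  · rintro ⟨hmaxPA, hmax⟩ I hI
    have : (I : Set R) ⊆ ⋃ p ∈ {p ∈ Λ | ∀ q ∈ Λ, p ≤ q → p = q}, (p : Set R) := by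
      intro x hx
      obtain ⟨q, hq, hxq⟩ := Set.mem_iUnion₂.mp (hI hx)
      obtain ⟨m, hm, hqm⟩ := hmax q hq
      exact Set.mem_biUnion hm (hqm hxq)
    obtain ⟨m, hm, hIm⟩ := hmaxPA I this
    exact ⟨m, hm.1, hIm⟩
end

section
/- Let R be a commutative ring and let {Λ_i}_{i ∈ I} be a family of sets of prime ideals of R, each of which is downward-closed (i.e. q ⊆ p with p ∈ Λ_i and q prime implies q ∈ Λ_i) and satisfies prime avoidance. Then the intersection Λ := ⋂_i Λ_i is downward-closed and satisfies prime avoidance. -/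
/-- an intersection of downward-closed sets of primes each satisfying prime
avoidance is downward-closed and satisfies prime avoidance. -/
theorem satisfiesPrimeAvoidance_iInter {R : Type*} [CommRing R] {ι : Type*}
    (Λ : ι → Set (Ideal R)) (hprime : ∀ i, ∀ p ∈ Λ i, p.IsPrime)
    (hdc : ∀ i, ∀ p ∈ Λ i, ∀ q : Ideal R, q.IsPrime → q ≤ p → q ∈ Λ i)
    (hpa : ∀ i, SatisfiesPrimeAvoidance (Λ i)) :
    (∀ p ∈ ⋂ i, Λ i, ∀ q : Ideal R, q.IsPrime → q ≤ p → q ∈ ⋂ i, Λ i) ∧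
      SatisfiesPrimeAvoidance (⋂ i, Λ i) := by
  refine ⟨fun p hp q hq hle =>
    Set.mem_iInter.2 fun i => hdc i p (Set.mem_iInter.1 hp i) q hq hle, ?_⟩
  intro I hI
  rcases isEmpty_or_nonempty ι with hι | hι
  · exact ⟨I, Set.mem_iInter.2 fun i => hι.elim i, le_rfl⟩
  set U : Set R := ⋃ p ∈ ⋂ i, Λ i, (p : Set R) with hU
  -- every member of the intersection is prime
  have hΛprime : ∀ p ∈ ⋂ i, Λ i, (p : Ideal R).IsPrime := fun p hp =>
    hprime hι.some p (Set.mem_iInter.1 hp hι.some)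
  -- Zorn's lemma on ideals between I and U
  obtain ⟨J, hIJ, hJmax⟩ :
      ∃ J, I ≤ J ∧ Maximal (· ∈ {K : Ideal R | (K : Set R) ⊆ U}) J := by
    refine zorn_le_nonempty₀ _ (fun c hc hchain y hy => ?_) I hI
    refine ⟨sSup c, ?_, fun z hz => le_sSup hz⟩
    intro x hx
    obtain ⟨K, hKc, hxK⟩ := (Submodule.mem_sSup_of_directed ⟨y, hy⟩
      (hchain.directedOn)).1 hx
    exact hc hKc hxK
  have hJU : (J : Set R) ⊆ U := hJmax.1
  -- J is prime
  have hJprime : J.IsPrime := by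
    constructor
    · intro h
      have h1 : (1 : R) ∈ U := hJU (h ▸ Submodule.mem_top)
      obtain ⟨p, hp, h1p⟩ := Set.mem_iUnion₂.1 h1
      exact (hΛprime p hp).ne_top (Ideal.eq_top_of_isUnit_mem p h1p isUnit_one)
    · intro a b hab
      by_contra hcon
      push_neg at hcon
      obtain ⟨ha, hb⟩ := hcon
      -- J + span{a} is strictly bigger, so not contained in U
      have key : ∀ c : R, c ∉ J → ∃ x ∈ J ⊔ Ideal.span {c}, x ∉ U := by
        intro c hc
        by_contra h
        push_neg at h
        have : J ⊔ Ideal.span {c} ≤ J := hJmax.2 (fun x hx => h x hx) le_sup_left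
        exact hc (this (le_sup_right (a := J) (Ideal.subset_span rfl)))
      obtain ⟨x, hxmem, hxU⟩ := key a ha
      obtain ⟨y, hymem, hyU⟩ := key b hb
      obtain ⟨j1, hj1, a', ha', rfl⟩ := Submodule.mem_sup.1 hxmem
      obtain ⟨j2, hj2, b', hb', rfl⟩ := Submodule.mem_sup.1 hymem
      obtain ⟨r, rfl⟩ := Ideal.mem_span_singleton'.1 ha'
      obtain ⟨s, rfl⟩ := Ideal.mem_span_singleton'.1 hb'
      have hxy : (j1 + r * a) * (j2 + s * b) ∈ J := by
        have : (j1 + r * a) * (j2 + s * b)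
            = j1 * (j2 + s * b) + (r * s) * (a * b) + j2 * (r * a) := by ring
        rw [this]
        exact J.add_mem (J.add_mem (J.mul_mem_right _ hj1) (J.mul_mem_left _ hab))
          (J.mul_mem_right _ hj2)
      have : (j1 + r * a) * (j2 + s * b) ∈ U := hJU hxy
      obtain ⟨p, hp, hmul⟩ := Set.mem_iUnion₂.1 this
      rcases (hΛprime p hp).mem_or_mem hmul with h' | h'
      · exact hxU (Set.mem_biUnion hp h')
      · exact hyU (Set.mem_biUnion hp h')
  -- J belongs to every Λ i
  refine ⟨J, Set.mem_iInter.2 fun i => ?_, hIJ⟩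
  have hsub : (J : Set R) ⊆ ⋃ p ∈ Λ i, (p : Set R) := by
    refine hJU.trans ?_
    intro x hx
    obtain ⟨p, hp, hxp⟩ := Set.mem_iUnion₂.1 hx
    exact Set.mem_biUnion (Set.mem_iInter.1 hp i) hxp
  obtain ⟨p, hp, hJp⟩ := hpa i J hsub
  exact hdc i p hp J hJprime hJp
end

section
/- Let R be a Dedekind domain. Then every set Λ of prime ideals of R satisfies prime avoidance if and only if the ideal class group of R is a torsion group. -/
open scoped nonZeroDivisors

/-- If every nonzero prime ideal has torsion class, the whole class group is torsion. -/
lemma torsion_of_primes_torsion {R : Type*} [CommRing R] [IsDomain R] [IsDedekindDomain R]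
    (h : ∀ p : Ideal R, p ≠ ⊥ → p.IsPrime →
      ∀ hp : p ∈ (Ideal R)⁰, IsOfFinOrder (ClassGroup.mk0 ⟨p, hp⟩)) :
    ∀ c : ClassGroup R, IsOfFinOrder c := by
  intro c
  obtain ⟨I, rfl⟩ := ClassGroup.mk0_surjective c
  have key : ∀ J : Ideal R, J ≠ 0 → ∀ hJ : J ∈ (Ideal R)⁰,
      IsOfFinOrder (ClassGroup.mk0 ⟨J, hJ⟩) := by
    intro J
    refine UniqueFactorizationMonoid.induction_on_prime J ?_ ?_ ?_
    · intro h0; exact absurd rfl h0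
    · intro x hx _ hx'
      have : x = ⊤ := Ideal.isUnit_iff.mp hx
      subst this
      have : ClassGroup.mk0 ⟨(⊤ : Ideal R), hx'⟩ = 1 := by
        rw [ClassGroup.mk0_eq_one_iff]
        exact ⟨⟨1, by simp [Ideal.submodule_span_eq]⟩⟩
      rw [this]; exact IsOfFinOrder.one
    · intro a p ha hp ih _ hpa
      have hp' : p ∈ (Ideal R)⁰ := mem_nonZeroDivisors_iff_ne_zero.mpr hp.ne_zero
      have ha' : a ∈ (Ideal R)⁰ := mem_nonZeroDivisors_iff_ne_zero.mpr ha
      have hmul : ClassGroup.mk0 ⟨p * a, hpa⟩ =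
          ClassGroup.mk0 ⟨p, hp'⟩ * ClassGroup.mk0 ⟨a, ha'⟩ := by
        rw [← MonoidHom.map_mul]; rfl
      rw [hmul]
      exact (Commute.all _ _).isOfFinOrder_mul
        (h p hp.ne_zero (Ideal.isPrime_of_prime hp) hp') (ih ha ha')
  exact key I (mem_nonZeroDivisors_iff_ne_zero.mp I.2) I.2

/-- in a Dedekind domain, every set of prime ideals satisfies prime avoidance
iff the ideal class group is torsion. -/
theorem forall_satisfiesPrimeAvoidance_iff_torsion_classGroup {R : Type*} [CommRing R]
    [IsDomain R] [IsDedekindDomain R] :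
    (∀ Λ : Set (Ideal R), (∀ p ∈ Λ, p.IsPrime) → SatisfiesPrimeAvoidance Λ) ↔
      ∀ c : ClassGroup R, IsOfFinOrder c := by
  constructor
  · -- avoidance ⟹ torsion
    intro hav
    refine torsion_of_primes_torsion ?_
    intro p hp0 hp hpmem
    by_contra hnt
    -- key claim: every nonzero element of `p` lies in some nonzero prime `q ≠ p`.
    have claim : ∀ x : R, x ∈ p → x ≠ 0 →
        ∃ q : Ideal R, q.IsPrime ∧ q ≠ ⊥ ∧ q ≠ p ∧ x ∈ q := by
      intro x hx hx0
      have hspan0 : Ideal.span {x} ≠ (0 : Ideal R) := by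
        simpa [Ideal.span_singleton_eq_bot] using hx0
      obtain ⟨f, hfprime, hfassoc⟩ :=
        UniqueFactorizationMonoid.exists_prime_factors (Ideal.span {x}) hspan0
      have hfprod : f.prod = Ideal.span {x} := associated_iff_eq.mp hfassoc
      by_cases hq : ∃ q ∈ f, q ≠ p
      · obtain ⟨q, hqf, hqp⟩ := hq
        have hqprime := hfprime q hqf
        refine ⟨q, Ideal.isPrime_of_prime hqprime, hqprime.ne_zero, hqp, ?_⟩
        have : q ∣ Ideal.span {x} := hfprod ▸ Multiset.dvd_prod hqf
        exact Ideal.le_of_dvd this (Ideal.mem_span_singleton_self x)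
      · -- then `span {x} = p ^ k` with `k ≥ 1`, so `p` is torsion: contradiction
        push_neg at hq
        have hf : f = Multiset.replicate (Multiset.card f) p :=
          Multiset.eq_replicate_card.mpr hq
        have hprodpow : Ideal.span {x} = p ^ Multiset.card f := by
          rw [← hfprod]
          nth_rewrite 1 [hf]
          rw [Multiset.prod_replicate]
        have hcard : Multiset.card f ≠ 0 := by
          intro h0
          rw [h0, pow_zero, Ideal.one_eq_top] at hprodpow
          have hxunit : IsUnit x := by
            have h1 : (1 : R) ∈ Ideal.span {x} := by
              rw [hprodpow]; exact Submodule.mem_top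
            obtain ⟨y, hy⟩ := Ideal.mem_span_singleton'.mp h1
            exact IsUnit.of_mul_eq_one (a := x) y (by rw [mul_comm]; exact hy)
          exact hp.ne_top (Ideal.eq_top_of_isUnit_mem p hx hxunit)
        exfalso
        apply hnt
        rw [isOfFinOrder_iff_pow_eq_one]
        refine ⟨Multiset.card f, Nat.pos_of_ne_zero hcard, ?_⟩
        have hpk : (⟨p, hpmem⟩ : (Ideal R)⁰) ^ Multiset.card f =
            ⟨p ^ Multiset.card f, pow_mem hpmem _⟩ := rfl
        rw [← MonoidHom.map_pow, hpk, ClassGroup.mk0_eq_one_iff, ← hprodpow]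
        exact ⟨⟨x, by simp [Ideal.submodule_span_eq]⟩⟩
    -- build the violating family
    set Λ : Set (Ideal R) := {q | q.IsPrime ∧ q ≠ ⊥ ∧ q ≠ p} with hΛdef
    have hcov : (p : Set R) ⊆ ⋃ q ∈ Λ, (q : Set R) := by
      intro x hx
      by_cases hx0 : x = 0
      · obtain ⟨x₀, hx₀p, hx₀0⟩ := (Submodule.ne_bot_iff p).mp hp0
        obtain ⟨q, hq1, hq2, hq3, _⟩ := claim x₀ hx₀p hx₀0
        exact Set.mem_biUnion (show q ∈ Λ from ⟨hq1, hq2, hq3⟩)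
          (by simp [hx0, SetLike.mem_coe])
      · obtain ⟨q, hq1, hq2, hq3, hxq⟩ := claim x hx hx0
        exact Set.mem_biUnion (show q ∈ Λ from ⟨hq1, hq2, hq3⟩) hxq
    obtain ⟨q, ⟨hq1, _, hq3⟩, hle⟩ := hav Λ (fun q hq => hq.1) p hcov
    exact hq3 ((hp.isMaximal hp0).eq_of_le hq1.ne_top hle).symm
  · -- torsion ⟹ avoidance
    intro htor Λ hΛ I hsub
    by_cases hI : I = ⊥
    · have h0 : (0 : R) ∈ ⋃ q ∈ Λ, (q : Set R) := hsub (by simp [hI])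
      obtain ⟨q, hq, _⟩ := Set.mem_iUnion₂.mp h0
      exact ⟨q, hq, hI ▸ bot_le⟩
    · have hI' : I ∈ (Ideal R)⁰ := mem_nonZeroDivisors_iff_ne_zero.mpr hI
      obtain ⟨n, hn, h1⟩ :=
        isOfFinOrder_iff_pow_eq_one.mp (htor (ClassGroup.mk0 ⟨I, hI'⟩))
      have hIn : (⟨I, hI'⟩ : (Ideal R)⁰) ^ n = ⟨I ^ n, pow_mem hI' n⟩ := rfl
      rw [← MonoidHom.map_pow, hIn, ClassGroup.mk0_eq_one_iff] at h1
      obtain ⟨a, ha⟩ := h1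
      have ha' : I ^ n = Ideal.span {a} := by simpa [Ideal.submodule_span_eq] using ha
      have haI : a ∈ I := Ideal.pow_le_self hn.ne'
        (ha' ▸ Ideal.mem_span_singleton_self a)
      obtain ⟨q, hq, haq⟩ := Set.mem_iUnion₂.mp (hsub haI)
      haveI := hΛ q hq
      refine ⟨q, hq, Ideal.IsPrime.le_of_pow_le (I := I) (n := n) ?_⟩
      rw [ha']
      exact (Ideal.span_singleton_le_iff_mem q).mpr haq
end

section
/- Let R be a commutative ring. Then every set Λ of prime ideals of R satisfies prime avoidance if and only if for every prime ideal q of R there exists x ∈ R with √(xR) = q (i.e. every prime ideal is the radical of a principal ideal). -/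
/-- every set of primes of `R` satisfies prime avoidance iff every prime ideal
of `R` is the radical of a principal ideal. -/
theorem forall_satisfiesPrimeAvoidance_iff_radical_principal {R : Type*} [CommRing R] :
    (∀ Λ : Set (Ideal R), (∀ p ∈ Λ, p.IsPrime) → SatisfiesPrimeAvoidance Λ) ↔
      ∀ q : Ideal R, q.IsPrime → ∃ x : R, (Ideal.span {x}).radical = q := by
  constructor
  · intro h q hq
    set Λ : Set (Ideal R) := {p | p.IsPrime ∧ ¬ q ≤ p} with hΛdef
    have hΛ : ∀ p ∈ Λ, p.IsPrime := fun p hp => hp.1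
    by_cases hsub : (q : Set R) ⊆ ⋃ p ∈ Λ, (p : Set R)
    · obtain ⟨p, hp, hle⟩ := h Λ hΛ q hsub
      exact absurd hle hp.2
    · obtain ⟨x, hxq, hx⟩ := Set.not_subset.mp hsub
      simp only [Set.mem_iUnion, not_exists] at hx
      refine ⟨x, le_antisymm ?_ ?_⟩
      · rw [Ideal.radical_eq_sInf]
        exact sInf_le ⟨(Ideal.span_le).2 (Set.singleton_subset_iff.2 hxq), hq⟩
      · rw [Ideal.radical_eq_sInf]
        refine le_sInf fun J hJ => ?_
        by_contra hqJ
        exact hx J ⟨hJ.2, hqJ⟩ (hJ.1 (Ideal.subset_span (Set.mem_singleton x)))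
  · intro h Λ hΛ I hI
    set S : Set (Ideal R) := {J | I ≤ J ∧ (J : Set R) ⊆ ⋃ p ∈ Λ, (p : Set R)} with hSdef
    have hIS : I ∈ S := ⟨le_rfl, hI⟩
    obtain ⟨J, hIJ, hJS, hmax⟩ := zorn_le_nonempty₀ S (fun c hcS hc y hyc => by
      refine ⟨sSup c, ⟨le_trans (hcS hyc).1 (le_sSup hyc), fun z hz => ?_⟩,
        fun z hz => le_sSup hz⟩
      obtain ⟨K, hKc, hzK⟩ :=
        (Submodule.mem_sSup_of_directed ⟨y, hyc⟩ hc.directedOn).mp hz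
      exact (hcS hKc).2 hzK) I hIS
    have hJsub : (J : Set R) ⊆ ⋃ p ∈ Λ, (p : Set R) := hJS.2
    -- J is prime
    have hJne : J ≠ ⊤ := by
      intro hJ
      have h1 : (1 : R) ∈ (J : Set R) := by rw [hJ]; exact Submodule.mem_top
      obtain ⟨p, hp⟩ := Set.mem_iUnion.mp (hJsub h1)
      simp only [Set.mem_iUnion] at hp
      obtain ⟨hpΛ, h1p⟩ := hp
      exact (hΛ p hpΛ).ne_top ((Ideal.eq_top_iff_one p).2 h1p)
    have hJprime : J.IsPrime := by
      refine ⟨hJne, fun {a b} hab => ?_⟩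
      by_contra hnot
      push_neg at hnot
      obtain ⟨ha, hb⟩ := hnot
      -- J + span{a} is strictly bigger, so not in S
      have key : ∀ c : R, c ∉ J →
          ∃ u, u ∈ J ⊔ Ideal.span {c} ∧ u ∉ ⋃ p ∈ Λ, ((p : Ideal R) : Set R) := by
        intro c hc
        by_contra hcon
        push_neg at hcon
        have hmem : J ⊔ Ideal.span {c} ∈ S :=
          ⟨le_trans hIJ (le_trans le_sup_left le_rfl), fun z hz => hcon z hz⟩
        have hle : J ⊔ Ideal.span {c} ≤ J := hmax hmem le_sup_left
        exact hc (hle (le_sup_right (a := J) (Ideal.subset_span (Set.mem_singleton c))))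
      obtain ⟨u, hu, hu'⟩ := key a ha
      obtain ⟨v, hv, hv'⟩ := key b hb
      obtain ⟨ja, hja, za, hza, hjau⟩ := Submodule.mem_sup.mp hu
      obtain ⟨jb, hjb, zb, hzb, hjbv⟩ := Submodule.mem_sup.mp hv
      obtain ⟨r, hr⟩ := Ideal.mem_span_singleton'.mp hza
      obtain ⟨s, hs⟩ := Ideal.mem_span_singleton'.mp hzb
      have huv : u * v ∈ J := by
        rw [← hjau, ← hjbv, ← hr, ← hs]
        have : (ja + r * a) * (jb + s * b)
            = ja * jb + ja * (s * b) + (r * a) * jb + (r * s) * (a * b) := by ring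
        rw [this]
        exact J.add_mem (J.add_mem (J.add_mem (J.mul_mem_right _ hja)
          (J.mul_mem_right _ hja)) (J.mul_mem_left _ hjb)) (J.mul_mem_left _ hab)
      obtain ⟨p, hp⟩ := Set.mem_iUnion.mp (hJsub huv)
      simp only [Set.mem_iUnion] at hp
      obtain ⟨hpΛ, huvp⟩ := hp
      rcases (hΛ p hpΛ).mem_or_mem huvp with h' | h'
      · exact hu' (Set.mem_iUnion.mpr ⟨p, Set.mem_iUnion.mpr ⟨hpΛ, h'⟩⟩)
      · exact hv' (Set.mem_iUnion.mpr ⟨p, Set.mem_iUnion.mpr ⟨hpΛ, h'⟩⟩)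
    obtain ⟨x, hx⟩ := h J hJprime
    have hxJ : x ∈ J := by
      rw [← hx]
      exact Ideal.le_radical (Ideal.subset_span (Set.mem_singleton x))
    obtain ⟨p, hp⟩ := Set.mem_iUnion.mp (hJsub hxJ)
    simp only [Set.mem_iUnion] at hp
    obtain ⟨hpΛ, hxp⟩ := hp
    refine ⟨p, hpΛ, le_trans hIJ ?_⟩
    calc J = (Ideal.span {x}).radical := hx.symm
    _ ≤ p.radical := Ideal.radical_mono ((Ideal.span_le).2 (Set.singleton_subset_iff.2 hxp))
    _ = p := (hΛ p hpΛ).radical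
end

section
/- Let R be a commutative ring. Then the following are equivalent: (i) for every prime ideal q of R, the set of primes p with q ⊄ p (i.e. the complement of V(q) in Spec R) satisfies prime avoidance; (ii) every prime ideal of R is the radical of a principal ideal. -/
/-- for every prime `q`, the complement of `V(q)` in `Spec R` satisfies prime
avoidance, iff every prime ideal of `R` is the radical of a principal ideal. -/
theorem complement_V_satisfiesPrimeAvoidance_iff_radical_principal {R : Type*} [CommRing R] :
    (∀ q : Ideal R, q.IsPrime →
        SatisfiesPrimeAvoidance {p : Ideal R | p.IsPrime ∧ ¬q ≤ p}) ↔
      ∀ q : Ideal R, q.IsPrime → ∃ x : R, (Ideal.span {x}).radical = q := by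
  constructor
  · intro h q hq
    have hnot : ¬ ((q : Set R) ⊆ ⋃ p ∈ {p : Ideal R | p.IsPrime ∧ ¬q ≤ p}, (p : Set R)) := by
      intro hsub
      obtain ⟨p, hp, hle⟩ := h q hq q hsub
      exact hp.2 hle
    rw [Set.not_subset] at hnot
    obtain ⟨x, hxq, hx⟩ := hnot
    simp only [Set.mem_iUnion, not_exists, Set.mem_setOf_eq, SetLike.mem_coe] at hx
    refine ⟨x, le_antisymm ?_ ?_⟩
    · rw [← hq.radical]
      exact Ideal.radical_mono (Ideal.span_le.mpr (Set.singleton_subset_iff.mpr hxq))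
    · rw [Ideal.radical_eq_sInf]
      refine le_sInf fun p ⟨hsp, hp⟩ => ?_
      by_contra hqp
      exact hx p ⟨hp, hqp⟩ (hsp (Ideal.mem_span_singleton_self x))
  · intro h q hq I hI
    obtain ⟨x, hx⟩ := h q hq
    by_contra hcon
    push_neg at hcon
    simp only [Set.mem_setOf_eq, and_imp] at hcon
    have hxq : x ∈ q := hx ▸ Ideal.le_radical (Ideal.mem_span_singleton_self x)
    have hxI : x ∈ I.radical := by
      rw [Ideal.radical_eq_sInf]
      refine Submodule.mem_sInf.mpr fun p ⟨hIp, hp⟩ => ?_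
      by_cases hqp : q ≤ p
      · exact hqp hxq
      · exact absurd hIp (hcon p hp hqp)
    obtain ⟨n, hn⟩ := hxI
    have := hI hn
    simp only [Set.mem_iUnion, Set.mem_setOf_eq, SetLike.mem_coe] at this
    obtain ⟨p, ⟨hp, hqp⟩, hxn⟩ := this
    refine hqp ?_
    rw [← hx, ← hp.radical]
    exact Ideal.radical_mono (Ideal.span_le.mpr (Set.singleton_subset_iff.mpr
      (hp.mem_of_pow_mem n hxn)))
end

section
/- Let k be a field and R = k[x,y,z]/(xy, xz), and let q = (y, z) be the minimal prime of R generated by the images of y and z. Then q is contained in the union of the prime ideals of R of height 1 that do not contain q; consequently, there is no element x ∈ R with √(xR) = q, so the arithmetic rank of q is 2. -/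
open MvPolynomial in
/-- The ideal `(xy, xz)` of `k[x,y,z]`. -/
noncomputable def relIdeal (k : Type*) [Field k] : Ideal (MvPolynomial (Fin 3) k) :=
  Ideal.span {(X 0 : MvPolynomial (Fin 3) k) * X 1, (X 0 : MvPolynomial (Fin 3) k) * X 2}

/-- The ring `R = k[x,y,z]/(xy, xz)`. -/
abbrev PaperRing (k : Type*) [Field k] : Type _ := MvPolynomial (Fin 3) k ⧸ relIdeal k

open MvPolynomial in
/-- The ideal `q = (y, z)` of `R = k[x,y,z]/(xy, xz)`. -/
noncomputable def qIdeal (k : Type*) [Field k] : Ideal (PaperRing k) :=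
  Ideal.span {Ideal.Quotient.mk (relIdeal k) (X 1), Ideal.Quotient.mk (relIdeal k) (X 2)}

namespace ArithRankAux
open MvPolynomial

variable (k : Type*) [Field k]

noncomputable def tau : MvPolynomial (Fin 3) k →ₐ[k] MvPolynomial (Fin 2) k :=
  aeval ![0, X 0, X 1]

noncomputable def psi : MvPolynomial (Fin 2) k →ₐ[k] MvPolynomial (Fin 3) k :=
  aeval ![X 1, X 2]

noncomputable def chi : MvPolynomial (Fin 3) k →ₐ[k] Polynomial k :=
  aeval ![Polynomial.X, 0, 0]

noncomputable def chiSec : Polynomial k →ₐ[k] MvPolynomial (Fin 3) k :=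
  Polynomial.aeval (X 0)

noncomputable def ev : MvPolynomial (Fin 2) k →ₐ[k] Polynomial k :=
  aeval ![0, Polynomial.X]

noncomputable def evSec : Polynomial k →ₐ[k] MvPolynomial (Fin 2) k :=
  Polynomial.aeval (X 1)

@[simp] lemma tau_X0 : tau k (X 0) = 0 := by simp [tau]
@[simp] lemma tau_X1 : tau k (X 1) = X 0 := by simp [tau]
@[simp] lemma tau_X2 : tau k (X 2) = X 1 := by simp [tau]
@[simp] lemma psi_X0 : psi k (X 0) = X 1 := by simp [psi]
@[simp] lemma psi_X1 : psi k (X 1) = X 2 := by simp [psi]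
@[simp] lemma chi_X0 : chi k (X 0) = Polynomial.X := by simp [chi]
@[simp] lemma chi_X1 : chi k (X 1) = 0 := by simp [chi]
@[simp] lemma chi_X2 : chi k (X 2) = 0 := by simp [chi]
@[simp] lemma ev_X0 : ev k (X 0) = 0 := by simp [ev]
@[simp] lemma ev_X1 : ev k (X 1) = Polynomial.X := by simp [ev]

lemma ker_aux {A S : Type*} [CommRing A] [CommRing S] [Algebra k A] [Algebra k S]
    (f : A →ₐ[k] S) (g : S →ₐ[k] A) (J : Ideal A) (hJ : J ≤ RingHom.ker f)
    (h : (Ideal.Quotient.mkₐ k J).comp (g.comp f) = Ideal.Quotient.mkₐ k J) :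
    RingHom.ker f = J := by
  refine le_antisymm (fun a ha => ?_) hJ
  have h2 := DFunLike.congr_fun h a
  simp only [AlgHom.comp_apply] at h2
  rw [show f a = 0 from ha, map_zero, map_zero] at h2
  exact Ideal.Quotient.eq_zero_iff_mem.mp (id h2.symm)

lemma ker_tau : RingHom.ker (tau k) = Ideal.span {(X 0 : MvPolynomial (Fin 3) k)} := by
  refine ker_aux k (tau k) (psi k) _ ?_ ?_
  · rw [Ideal.span_le, Set.singleton_subset_iff]
    simp [RingHom.mem_ker]
  · apply MvPolynomial.algHom_ext
    intro i
    fin_cases i <;>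
      simp [Ideal.Quotient.mkₐ_eq_mk, Ideal.Quotient.eq_zero_iff_mem,
        Ideal.subset_span, Set.mem_singleton_iff]

lemma ker_chi : RingHom.ker (chi k) =
    Ideal.span {(X 1 : MvPolynomial (Fin 3) k), X 2} := by
  refine ker_aux k (chi k) (chiSec k) _ ?_ ?_
  · rw [Ideal.span_le]
    rintro a ha
    simp only [Set.mem_insert_iff, Set.mem_singleton_iff] at ha
    rcases ha with rfl | rfl <;> simp [RingHom.mem_ker]
  · apply MvPolynomial.algHom_ext
    intro i
    fin_cases i <;>
      simp [Ideal.Quotient.mkₐ_eq_mk, chiSec] <;>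
      exact Eq.symm (Ideal.Quotient.eq_zero_iff_mem.mpr (Ideal.subset_span (by simp)))

lemma ker_ev : RingHom.ker (ev k) = Ideal.span {(X 0 : MvPolynomial (Fin 2) k)} := by
  refine ker_aux k (ev k) (evSec k) _ ?_ ?_
  · rw [Ideal.span_le, Set.singleton_subset_iff]
    simp [RingHom.mem_ker]
  · apply MvPolynomial.algHom_ext
    intro i
    fin_cases i <;> simp [Ideal.Quotient.mkₐ_eq_mk, evSec, Ideal.Quotient.eq_zero_iff_mem,
      Ideal.subset_span]

lemma prime_X0B : Prime (X 0 : MvPolynomial (Fin 2) k) := by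
  have h : (Ideal.span {(X 0 : MvPolynomial (Fin 2) k)}).IsPrime :=
    ker_ev k ▸ RingHom.ker_isPrime _
  exact (Ideal.span_singleton_prime (X_ne_zero _)).mp h

end ArithRankAux

namespace ArithRankAux
open MvPolynomial

variable (k : Type*) [Field k]

/-- shorthand for the quotient map. -/
noncomputable def mkR : MvPolynomial (Fin 3) k →+* PaperRing k := Ideal.Quotient.mk (relIdeal k)

lemma rel_le_ker_tau : relIdeal k ≤ RingHom.ker (tau k).toRingHom := by
  rw [relIdeal, Ideal.span_le]
  rintro a ha
  simp only [Set.mem_insert_iff, Set.mem_singleton_iff] at ha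
  rcases ha with rfl | rfl <;> simp [RingHom.mem_ker]

noncomputable def rho : PaperRing k →+* MvPolynomial (Fin 2) k :=
  Ideal.Quotient.lift (relIdeal k) (tau k).toRingHom (fun _ ha => rel_le_ker_tau k ha)

@[simp] lemma rho_mk (a : MvPolynomial (Fin 3) k) : rho k (mkR k a) = tau k a := rfl

@[simp] lemma rho_mk' (a : MvPolynomial (Fin 3) k) :
    rho k (Ideal.Quotient.mk (relIdeal k) a) = tau k a := rfl

lemma tau_psi (b : MvPolynomial (Fin 2) k) : tau k (psi k b) = b := by
  have h : (tau k).comp (psi k) = AlgHom.id k _ := by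
    apply MvPolynomial.algHom_ext
    intro i
    fin_cases i <;> simp
  exact DFunLike.congr_fun h b

lemma rho_surjective : Function.Surjective (rho k) :=
  fun b => ⟨mkR k (psi k b), by simp [tau_psi]⟩

lemma ker_rho : RingHom.ker (rho k) = Ideal.span {mkR k (X 0)} := by
  rw [rho, Ideal.ker_quotient_lift]
  rw [show RingHom.ker (tau k).toRingHom = Ideal.span {(X 0 : MvPolynomial (Fin 3) k)} from
    ker_tau k]
  rw [Ideal.map_span, Set.image_singleton]
  rfl

lemma rel_le_ker_chi : relIdeal k ≤ RingHom.ker (chi k).toRingHom := by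
  rw [relIdeal, Ideal.span_le]
  rintro a ha
  simp only [Set.mem_insert_iff, Set.mem_singleton_iff] at ha
  rcases ha with rfl | rfl <;> simp [RingHom.mem_ker]

noncomputable def chiR : PaperRing k →+* Polynomial k :=
  Ideal.Quotient.lift (relIdeal k) (chi k).toRingHom (fun _ ha => rel_le_ker_chi k ha)

@[simp] lemma chiR_mk (a : MvPolynomial (Fin 3) k) : chiR k (mkR k a) = chi k a := rfl

lemma ker_chiR : RingHom.ker (chiR k) = qIdeal k := by
  rw [chiR, Ideal.ker_quotient_lift]
  rw [show RingHom.ker (chi k).toRingHom =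
    Ideal.span {(X 1 : MvPolynomial (Fin 3) k), X 2} from ker_chi k]
  rw [Ideal.map_span, Set.image_insert_eq, Set.image_singleton, qIdeal]

instance qIdeal_isPrime : (qIdeal k).IsPrime := ker_chiR k ▸ RingHom.ker_isPrime _

lemma x_mul_y : mkR k (X 0) * mkR k (X 1) = 0 := by
  rw [← map_mul, show mkR k = Ideal.Quotient.mk (relIdeal k) from rfl,
    Ideal.Quotient.eq_zero_iff_mem]
  exact Ideal.subset_span (by simp)

lemma x_mul_z : mkR k (X 0) * mkR k (X 2) = 0 := by
  rw [← map_mul, show mkR k = Ideal.Quotient.mk (relIdeal k) from rfl,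
    Ideal.Quotient.eq_zero_iff_mem]
  exact Ideal.subset_span (by simp)

lemma mem_or_mem (p : Ideal (PaperRing k)) (hp : p.IsPrime) :
    mkR k (X 0) ∈ p ∨ (mkR k (X 1) ∈ p ∧ mkR k (X 2) ∈ p) := by
  have h1 := hp.mem_or_mem (show mkR k (X 0) * mkR k (X 1) ∈ p by rw [x_mul_y]; exact p.zero_mem)
  have h2 := hp.mem_or_mem (show mkR k (X 0) * mkR k (X 2) ∈ p by rw [x_mul_z]; exact p.zero_mem)
  tauto

lemma x_notMem_q : mkR k (X 0) ∉ qIdeal k := by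
  intro h
  rw [← ker_chiR] at h
  simp only [RingHom.mem_ker, chiR_mk, chi_X0] at h
  exact Polynomial.X_ne_zero h

/-- the minimal prime `(x)` -/
noncomputable def p1 : Ideal (PaperRing k) := Ideal.span {mkR k (X 0)}

instance p1_isPrime : (p1 k).IsPrime := by
  rw [show p1 k = RingHom.ker (rho k) from (ker_rho k).symm]
  exact RingHom.ker_isPrime _

lemma y_notMem_p1 : mkR k (X 1) ∉ p1 k := by
  intro h
  rw [show p1 k = RingHom.ker (rho k) from (ker_rho k).symm] at h
  simp only [RingHom.mem_ker, rho_mk, tau_X1] at h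
  exact X_ne_zero _ h

lemma p1_min (a : Ideal (PaperRing k)) (ha : a.IsPrime) (hle : a ≤ p1 k) : a = p1 k := by
  rcases mem_or_mem k a ha with hx | ⟨hy, _⟩
  · exact le_antisymm hle (by rw [p1, Ideal.span_le, Set.singleton_subset_iff]; exact hx)
  · exact absurd (hle hy) (y_notMem_p1 k)

lemma q_min (a : Ideal (PaperRing k)) (ha : a.IsPrime) (hle : a ≤ qIdeal k) : a = qIdeal k := by
  rcases mem_or_mem k a ha with hx | ⟨hy, hz⟩
  · exact absurd (hle hx) (x_notMem_q k)
  · refine le_antisymm hle ?_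
    rw [qIdeal, Ideal.span_le]
    rintro b hb
    simp only [Set.mem_insert_iff, Set.mem_singleton_iff] at hb
    rcases hb with rfl | rfl
    exacts [hy, hz]

end ArithRankAux

namespace ArithRankAux
open MvPolynomial

variable (k : Type*) [Field k]

lemma descent {P : Ideal (MvPolynomial (Fin 2) k)} (hP : P.IsPrime)
    {g : MvPolynomial (Fin 2) k} (hg : Prime g) (hlt : P < Ideal.span {g}) : P = ⊥ := by
  rw [eq_bot_iff]
  intro h hh
  rw [Submodule.mem_bot]
  revert hh
  refine wellFounded_dvdNotUnit.induction (C := fun x => x ∈ P → x = 0) h ?_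
  intro x IH hx
  obtain ⟨c, rfl⟩ : g ∣ x := Ideal.mem_span_singleton.mp (hlt.le hx)
  have hgP : g ∉ P := fun hgP =>
    hlt.not_ge (Ideal.span_le.mpr (Set.singleton_subset_iff.mpr hgP))
  have hcP : c ∈ P := (hP.mem_or_mem hx).resolve_left hgP
  by_cases hc0 : c = 0
  · simp [hc0]
  · have hd : DvdNotUnit c (g * c) := ⟨hc0, g, hg.not_unit, mul_comm g c⟩
    rw [IH c hd hcP, mul_zero]

variable {k}

/-- The prime `(x, g)` of `R`, for `g` a polynomial in `y, z`. -/
noncomputable def Pg (g : MvPolynomial (Fin 2) k) : Ideal (PaperRing k) :=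
  Ideal.comap (rho k) (Ideal.span {g})

lemma span_g_isPrime {g : MvPolynomial (Fin 2) k} (hg : Irreducible g) :
    (Ideal.span {g}).IsPrime :=
  (Ideal.span_singleton_prime hg.ne_zero).mpr
    (UniqueFactorizationMonoid.irreducible_iff_prime.mp hg)

lemma Pg_isPrime {g : MvPolynomial (Fin 2) k} (hg : Irreducible g) : (Pg g).IsPrime := by
  haveI := span_g_isPrime hg
  exact Ideal.IsPrime.comap _

lemma ker_rho_le_Pg (g : MvPolynomial (Fin 2) k) : RingHom.ker (rho k) ≤ Pg g := by
  intro a ha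
  rw [RingHom.mem_ker] at ha
  rw [Pg, Ideal.mem_comap, ha]
  exact Ideal.zero_mem _

lemma p1_lt_Pg {g : MvPolynomial (Fin 2) k} (hg : Irreducible g) : p1 k < Pg g := by
  have hle : p1 k ≤ Pg g := by
    rw [show p1 k = RingHom.ker (rho k) from (ker_rho k).symm]
    exact ker_rho_le_Pg g
  refine lt_of_le_of_ne hle (fun he => ?_)
  have hmem : mkR k (psi k g) ∈ Pg g := by
    rw [Pg, Ideal.mem_comap, rho_mk, tau_psi]
    exact Ideal.subset_span rfl
  rw [← he, show p1 k = RingHom.ker (rho k) from (ker_rho k).symm, RingHom.mem_ker,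
    rho_mk, tau_psi] at hmem
  exact hg.ne_zero hmem

lemma y_mem_q : mkR k (X 1) ∈ qIdeal k := Ideal.subset_span (Set.mem_insert _ _)
lemma z_mem_q : mkR k (X 2) ∈ qIdeal k := Ideal.subset_span (Set.mem_insert_of_mem _ rfl)

lemma q_not_le_Pg {g : MvPolynomial (Fin 2) k} (hg : Irreducible g) :
    ¬ qIdeal k ≤ Pg g := by
  intro hle
  have h0 : g ∣ (X 0 : MvPolynomial (Fin 2) k) := by
    have := hle (y_mem_q (k := k))
    rw [Pg, Ideal.mem_comap, rho_mk, tau_X1] at this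
    exact Ideal.mem_span_singleton.mp this
  have h1 : g ∣ (X 1 : MvPolynomial (Fin 2) k) := by
    have := hle (z_mem_q (k := k))
    rw [Pg, Ideal.mem_comap, rho_mk, tau_X2] at this
    exact Ideal.mem_span_singleton.mp this
  have hassoc := hg.associated_of_dvd (prime_X0B k).irreducible h0
  obtain ⟨c, hc⟩ : (X 0 : MvPolynomial (Fin 2) k) ∣ X 1 := hassoc.symm.dvd.trans h1
  have := congrArg (ev k) hc
  simp only [ev_X1, map_mul, ev_X0, zero_mul] at this
  exact Polynomial.X_ne_zero this

lemma lt_Pg_eq_p1 {g : MvPolynomial (Fin 2) k} (hg : Irreducible g)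
    (p' : Ideal (PaperRing k)) (hp' : p'.IsPrime) (hlt : p' < Pg g) : p' = p1 k := by
  have hker : RingHom.ker (rho k) ≤ p' := by
    rw [ker_rho, Ideal.span_le, Set.singleton_subset_iff]
    rcases mem_or_mem k p' hp' with hx | ⟨hy, hz⟩
    · exact hx
    · exfalso
      apply q_not_le_Pg hg
      refine le_trans ?_ hlt.le
      rw [qIdeal, Ideal.span_le]
      rintro b hb
      simp only [Set.mem_insert_iff, Set.mem_singleton_iff] at hb
      rcases hb with rfl | rfl
      exacts [hy, hz]
  haveI := hp'
  have hPrime : (Ideal.map (rho k) p').IsPrime :=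
    Ideal.map_isPrime_of_surjective (rho_surjective k) hker
  have hcomap : Ideal.comap (rho k) (Ideal.map (rho k) p') = p' := by
    rw [Ideal.comap_map_of_surjective _ (rho_surjective k)]
    refine sup_eq_left.mpr ?_
    rwa [← RingHom.ker_eq_comap_bot]
  have hmaple : Ideal.map (rho k) p' < Ideal.span {g} := by
    refine lt_of_le_of_ne (Ideal.map_le_iff_le_comap.mpr hlt.le) (fun he => ?_)
    apply hlt.ne
    rw [← hcomap, he]
    rfl
  have hbot := descent k hPrime
    (UniqueFactorizationMonoid.irreducible_iff_prime.mp hg) hmaple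
  rw [← hcomap, hbot, ← RingHom.ker_eq_comap_bot, ker_rho]
  rfl

lemma isMin_p1 : IsMin (⟨p1 k, p1_isPrime k⟩ : PrimeSpectrum (PaperRing k)) := by
  intro y hy
  rw [← PrimeSpectrum.asIdeal_le_asIdeal] at hy ⊢
  exact le_of_eq (p1_min k y.asIdeal y.isPrime hy).symm

lemma height_Pg {g : MvPolynomial (Fin 2) k} (hg : Irreducible g) :
    Order.height (⟨Pg g, Pg_isPrime hg⟩ : PrimeSpectrum (PaperRing k)) = 1 := by
  apply le_antisymm
  · have : Order.height (⟨Pg g, Pg_isPrime hg⟩ : PrimeSpectrum (PaperRing k)) ≤ (1 : ℕ) := by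
      refine Order.height_le_coe_iff.mpr (fun y hy => ?_)
      rw [← PrimeSpectrum.asIdeal_lt_asIdeal] at hy
      have hy1 : y = (⟨p1 k, p1_isPrime k⟩ : PrimeSpectrum (PaperRing k)) :=
        PrimeSpectrum.ext (lt_Pg_eq_p1 hg y.asIdeal y.isPrime hy)
      rw [hy1, Order.height_eq_zero.mpr isMin_p1]
      norm_num
    exact_mod_cast this
  · rw [ENat.one_le_iff_ne_zero, Ne, Order.height_eq_zero]
    intro hmin
    have hlt : (⟨p1 k, p1_isPrime k⟩ : PrimeSpectrum (PaperRing k)) <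
        ⟨Pg g, Pg_isPrime hg⟩ := by
      rw [← PrimeSpectrum.asIdeal_lt_asIdeal]
      exact p1_lt_Pg hg
    exact absurd (hmin hlt.le) hlt.not_ge

noncomputable def ev0 : MvPolynomial (Fin 2) k →ₐ[k] k := aeval ![0, 0]

set_option synthInstance.maxHeartbeats 1000000 in
lemma exists_good_prime (f : PaperRing k) (hf : f ∈ qIdeal k) :
    ∃ p : PrimeSpectrum (PaperRing k),
      Order.height p = 1 ∧ ¬ qIdeal k ≤ p.asIdeal ∧ f ∈ p.asIdeal := by
  have hXirr : Irreducible (X 0 : MvPolynomial (Fin 2) k) := (prime_X0B k).irreducible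
  obtain ⟨a, b, hab⟩ := Ideal.mem_span_pair.mp hf
  by_cases h0 : rho k f = 0
  · refine ⟨⟨Pg (X 0), Pg_isPrime hXirr⟩, height_Pg hXirr, q_not_le_Pg hXirr, ?_⟩
    show f ∈ Pg (X 0)
    rw [Pg, Ideal.mem_comap, h0]
    exact Ideal.zero_mem _
  · have hnu : ¬ IsUnit (rho k f) := by
      intro hu
      have hev : ev0 (rho k f) = 0 := by
        rw [← hab]
        simp only [map_add, map_mul, rho_mk', tau_X1, tau_X2]
        simp [ev0]
      exact (by simp : ¬ IsUnit (0 : k)) (hev ▸ hu.map (ev0 (k := k)))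
    obtain ⟨g, hgi, hgd⟩ := WfDvdMonoid.exists_irreducible_factor hnu h0
    refine ⟨⟨Pg g, Pg_isPrime hgi⟩, height_Pg hgi, q_not_le_Pg hgi, ?_⟩
    show f ∈ Pg g
    rw [Pg, Ideal.mem_comap]
    exact Ideal.mem_span_singleton.mpr hgd

end ArithRankAux

open MvPolynomial in
/-- in `R = k[x,y,z]/(xy, xz)`, the minimal prime `q = (y, z)` is contained in
the union of the height-one primes not containing `q`; consequently `q` is not the radical of
a principal ideal, and the arithmetic rank of `q` is `2`. -/
theorem qIdeal_subset_union_height_one_not_containing (k : Type*) [Field k] :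
    qIdeal k ∈ minimalPrimes (PaperRing k) ∧
    ((qIdeal k : Set (PaperRing k)) ⊆
      ⋃ p ∈ {p : PrimeSpectrum (PaperRing k) |
          Order.height p = 1 ∧ ¬qIdeal k ≤ p.asIdeal}, (p.asIdeal : Set (PaperRing k))) ∧
    (¬∃ x : PaperRing k, (Ideal.span {x}).radical = qIdeal k) ∧
    (∃ a b : PaperRing k, (Ideal.span {a, b}).radical = qIdeal k) := by
  refine ⟨?_, ?_, ?_, ?_⟩
  · exact ⟨⟨ArithRankAux.qIdeal_isPrime k, bot_le⟩,
      fun y hy hle => (ArithRankAux.q_min k y hy.1 hle).ge⟩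
  · intro f hf
    obtain ⟨p, h1, h2, h3⟩ := ArithRankAux.exists_good_prime f hf
    exact Set.mem_iUnion₂.mpr ⟨p, ⟨h1, h2⟩, h3⟩
  · rintro ⟨x, hx⟩
    have hxq : x ∈ qIdeal k := hx ▸ Ideal.le_radical (Ideal.mem_span_singleton_self x)
    obtain ⟨p, _, hnle, hxp⟩ := ArithRankAux.exists_good_prime x hxq
    apply hnle
    rw [← hx]
    exact (p.isPrime.radical_le_iff).mpr
      ((Ideal.span_le).mpr (Set.singleton_subset_iff.mpr hxp))
  · refine ⟨Ideal.Quotient.mk (relIdeal k) (X 1), Ideal.Quotient.mk (relIdeal k) (X 2), ?_⟩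
    have h : qIdeal k = Ideal.span {Ideal.Quotient.mk (relIdeal k) (X 1),
        Ideal.Quotient.mk (relIdeal k) (X 2)} := rfl
    rw [← h]
    exact (ArithRankAux.qIdeal_isPrime k).radical
end
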